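/- Let X ≥ 1 and let s = σ + it with σ = Re s > θ and s ≠ 1. Then |ζ(s) − ζ_X(s) − κ·X^(1−s)/(s−1)| ≤ A·(|s| + σ − θ)/(σ−θ) · X^(θ−σ). -/

import Mathlib

open scoped BigOperators Real

/-- The multiplicative norm on the Beurling generalized integers `ℕ →₀ ℕ`
generated by the primes `q i`. -/
noncomputable def bNorm (q : ℕ → ℝ) (g : ℕ →₀ ℕ) : ℝ :=
  g.prod fun i k => q i ^ k

/-- The integer counting function `N(x)`. -/
noncomputable def bN (q : ℕ → ℝ) (x : ℝ) : ℕ :=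
  {g : ℕ →₀ ℕ | bNorm q g ≤ x}.ncard

/-- The remainder `R(x) = N(x) - κ(x-1)`. -/
noncomputable def bR (q : ℕ → ℝ) (κ : ℝ) (x : ℝ) : ℝ :=
  (bN q x : ℝ) - κ * (x - 1)

/-- The Beurling zeta function, via the analytic continuation formula
`ζ(s) = κ/(s-1) + s ∫_1^∞ R(x) x^(-s-1) dx`. -/
noncomputable def bZeta (q : ℕ → ℝ) (κ : ℝ) (s : ℂ) : ℂ :=
  (κ : ℂ) / (s - 1) + s * ∫ x in Set.Ioi (1 : ℝ), (bR q κ x : ℂ) * (x : ℂ) ^ (-s - 1)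

/-- The partial sums `ζ_X(s) = ∑_{‖g‖ ≤ X} ‖g‖^{-s}`. -/
noncomputable def bZetaX (q : ℕ → ℝ) (X : ℝ) (s : ℂ) : ℂ :=
  ∑ᶠ g ∈ {g : ℕ →₀ ℕ | bNorm q g ≤ X}, (bNorm q g : ℂ) ^ (-s)

/-! Splitting `∫_1^∞ = ∫_1^X + ∫_X^∞` in the definition of `ζ`, partial summation gives
`s ∫_1^X N(x) x^(-s-1) dx = ζ_X(s) - N(X) X^(-s)`, and the `κ (x - 1)` part integrates
explicitly, so that
`ζ(s) - ζ_X(s) - κ X^(1-s)/(s-1) = s ∫_X^∞ R(x) x^(-s-1) dx - R(X) X^(-s)`.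
Axiom A bounds the boundary term by `A X^(θ-σ)` and the tail by `|s| A X^(θ-σ) / (σ - θ)`. -/

open MeasureTheory Set
open scoped Finset

section ComplexPower

variable {a b : ℝ}

lemma integrableOn_Ioc_ofReal_cpow (r : ℂ) (ha : 0 < a) :
    IntegrableOn (fun x : ℝ => (x : ℂ) ^ r) (Ioc a b) :=
  (ContinuousOn.integrableOn_Icc fun x hx => (Complex.continuousAt_ofReal_cpow_const x r
    (Or.inr (ha.trans_le hx.1).ne')).continuousWithinAt).mono_set Ioc_subset_Icc_self

-- Multiplied out rather than divided by `r + 1`, these identities also hold at `r = -1`.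
lemma add_one_mul_integral_Ioc_ofReal_cpow (r : ℂ) (ha : 0 < a) (hab : a ≤ b) :
    (r + 1) * ∫ x in Ioc a b, (x : ℂ) ^ r = (b : ℂ) ^ (r + 1) - (a : ℂ) ^ (r + 1) := by
  rcases eq_or_ne r (-1) with rfl | hr
  · simp
  rw [← intervalIntegral.integral_of_le hab,
    integral_cpow (Or.inr ⟨hr, notMem_uIcc_of_lt ha (ha.trans_le hab)⟩),
    mul_div_cancel₀ _ (add_eq_zero_iff_eq_neg.not.2 hr)]

lemma add_one_mul_integral_Ioc_indicator_Ici_ofReal_cpow (r : ℂ) {t : ℝ} (ha : 0 < a)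
    (hat : a ≤ t) (htb : t ≤ b) :
    (r + 1) * ∫ x in Ioc a b, (Ici t).indicator (fun x : ℝ => (x : ℂ) ^ r) x =
      (b : ℂ) ^ (r + 1) - (t : ℂ) ^ (r + 1) := by
  rw [integral_congr_ae (ae_restrict_of_ae (indicator_ae_eq_of_ae_eq_set Ioi_ae_eq_Ici).symm),
    setIntegral_indicator measurableSet_Ioi, Ioc_inter_Ioi, max_eq_right hat]
  exact add_one_mul_integral_Ioc_ofReal_cpow r (ha.trans_le hat) htb

variable {ι : Type*} (F : Finset ι) (t : ι → ℝ) (r : ℂ)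

lemma card_filter_le_mul_ofReal_cpow_eq_sum_indicator :
    (fun x : ℝ => (#{i ∈ F | t i ≤ x} : ℂ) * (x : ℂ) ^ r) =
      fun x => ∑ i ∈ F, (Ici (t i)).indicator (fun x : ℝ => (x : ℂ) ^ r) x := by
  ext x
  simp only [Finset.natCast_card_filter, Finset.sum_mul, indicator_apply, Set.mem_Ici, ite_mul,
    one_mul, zero_mul]

lemma integrableOn_Ioc_card_filter_le_mul_ofReal_cpow (ha : 0 < a) :
    IntegrableOn (fun x : ℝ => (#{i ∈ F | t i ≤ x} : ℂ) * (x : ℂ) ^ r) (Ioc a b) := by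
  rw [card_filter_le_mul_ofReal_cpow_eq_sum_indicator]
  exact integrable_finsetSum F fun i _ =>
    (integrableOn_Ioc_ofReal_cpow r ha).indicator measurableSet_Ici

lemma add_one_mul_integral_Ioc_card_filter_le_mul_ofReal_cpow (ha : 0 < a)
    (hF : ∀ i ∈ F, t i ∈ Icc a b) :
    (r + 1) * ∫ x in Ioc a b, (#{i ∈ F | t i ≤ x} : ℂ) * (x : ℂ) ^ r =
      #F * (b : ℂ) ^ (r + 1) - ∑ i ∈ F, (t i : ℂ) ^ (r + 1) := by
  rw [card_filter_le_mul_ofReal_cpow_eq_sum_indicator, integral_finsetSum _ fun i _ =>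
    (integrableOn_Ioc_ofReal_cpow r ha).indicator measurableSet_Ici, Finset.mul_sum,
    Finset.sum_congr rfl fun i hi =>
      add_one_mul_integral_Ioc_indicator_Ici_ofReal_cpow r ha (hF i hi).1 (hF i hi).2]
  simp [Finset.sum_sub_distrib]

end ComplexPower

section PowerTail

variable {E : Type*} [NormedAddCommGroup E] {f : ℝ → E} {c C β : ℝ}

lemma integrableOn_Ioi_of_norm_le_rpow (hc : 0 < c) (hβ : β < 0)
    (hf : AEStronglyMeasurable f (volume.restrict (Ioi c)))
    (hbound : ∀ x ∈ Ioi c, ‖f x‖ ≤ C * x ^ (β - 1)) : IntegrableOn f (Ioi c) :=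
  ((integrableOn_Ioi_rpow_of_lt (by linarith) hc).const_mul C).mono' hf
    ((ae_restrict_mem measurableSet_Ioi).mono hbound)

lemma norm_integral_Ioi_le_of_norm_le_rpow [NormedSpace ℝ E] (hc : 0 < c) (hβ : β < 0)
    (hbound : ∀ x ∈ Ioi c, ‖f x‖ ≤ C * x ^ (β - 1)) :
    ‖∫ x in Ioi c, f x‖ ≤ C * c ^ β / -β := by
  have hexp : β - 1 < -1 := by linarith
  calc ‖∫ x in Ioi c, f x‖ ≤ ∫ x in Ioi c, C * x ^ (β - 1) :=
        norm_integral_le_of_norm_le ((integrableOn_Ioi_rpow_of_lt hexp hc).const_mul C)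
          ((ae_restrict_mem measurableSet_Ioi).mono hbound)
    _ = C * c ^ β / -β := by
        rw [integral_const_mul, integral_Ioi_rpow_of_lt hexp hc, sub_add_cancel]
        ring

end PowerTail

lemma cpow_eq_mul_cpow_sub_one {z : ℂ} (hz : z ≠ 0) (r : ℂ) : z ^ r = z * z ^ (r - 1) := by
  calc z ^ r = z ^ (1 + (r - 1)) := by rw [add_sub_cancel]
    _ = z * z ^ (r - 1) := by rw [Complex.cpow_add _ _ hz, Complex.cpow_one]

lemma norm_ofReal_mul_cpow_neg_sub_one_le {x y A θ : ℝ} (hx : 0 < x) (hy : |y| ≤ A * x ^ θ)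
    (s : ℂ) : ‖(y : ℂ) * (x : ℂ) ^ (-s - 1)‖ ≤ A * x ^ (θ - s.re - 1) := by
  rw [norm_mul, Complex.norm_real, Real.norm_eq_abs, Complex.norm_cpow_eq_rpow_re_of_pos hx,
    show θ - s.re - 1 = θ + (-s - 1).re by simp; ring, Real.rpow_add hx, ← mul_assoc]
  gcongr

section Beurling

variable {q : ℕ → ℝ} {κ X : ℝ} {s : ℂ}

lemma one_le_bNorm (hq : ∀ i, 1 < q i) (g : ℕ →₀ ℕ) : 1 ≤ bNorm q g :=
  Finset.one_le_prod fun i _ => one_le_pow₀ (hq i).le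

variable (hfin : ∀ x : ℝ, {g : ℕ →₀ ℕ | bNorm q g ≤ x}.Finite)
include hfin

lemma monotone_bN : Monotone fun x => (bN q x : ℝ) := fun _ y hxy =>
  Nat.cast_le.2 (ncard_le_ncard (fun _ hg => le_trans hg hxy) (hfin y))

lemma measurable_bR (κ : ℝ) : Measurable (bR q κ) :=
  (monotone_bN hfin).measurable.sub (measurable_const.mul (measurable_id.sub measurable_const))

lemma bN_eq_card_filter {x : ℝ} (hxX : x ≤ X) :
    bN q x = #{g ∈ (hfin X).toFinset | bNorm q g ≤ x} := by
  rw [bN, ← ncard_coe_finset]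
  congr 1
  ext g
  simpa using fun h => h.trans hxX

lemma bN_eq_card : bN q X = #(hfin X).toFinset := ncard_eq_toFinset_card _ (hfin X)

lemma bZetaX_eq_sum : bZetaX q X s = ∑ g ∈ (hfin X).toFinset, (bNorm q g : ℂ) ^ (-s) := by
  rw [bZetaX, finsum_mem_eq_finite_toFinset_sum _ (hfin X)]

lemma integrableOn_Ioc_bN_mul_cpow (r : ℂ) :
    IntegrableOn (fun x : ℝ => (bN q x : ℂ) * (x : ℂ) ^ r) (Ioc 1 X) :=
  (integrableOn_Ioc_card_filter_le_mul_ofReal_cpow _ _ r one_pos).congr_fun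
    (fun x hx => by rw [bN_eq_card_filter hfin hx.2]) measurableSet_Ioc

lemma mul_integral_Ioc_bN_mul_cpow (hq : ∀ i, 1 < q i) (s : ℂ) :
    s * ∫ x in Ioc 1 X, (bN q x : ℂ) * (x : ℂ) ^ (-s - 1) =
      bZetaX q X s - bN q X * (X : ℂ) ^ (-s) := by
  have h := add_one_mul_integral_Ioc_card_filter_le_mul_ofReal_cpow (hfin X).toFinset (bNorm q)
    (-s - 1) one_pos fun g hg => ⟨one_le_bNorm hq g, (hfin X).mem_toFinset.1 hg⟩
  rw [sub_add_cancel] at h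
  rw [setIntegral_congr_fun measurableSet_Ioc fun x hx => by rw [bN_eq_card_filter hfin hx.2],
    bZetaX_eq_sum hfin, bN_eq_card hfin]
  linear_combination -h

lemma mul_integral_Ioc_bR_mul_cpow (hq : ∀ i, 1 < q i) (hX : 1 ≤ X) (hs1 : s ≠ 1) :
    s * ∫ x in Ioc 1 X, (bR q κ x : ℂ) * (x : ℂ) ^ (-s - 1) =
      bZetaX q X s - bN q X * (X : ℂ) ^ (-s) -
        κ * (s * ((X : ℂ) ^ (1 - s) - 1) / (1 - s) - (1 - (X : ℂ) ^ (-s))) := by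
  have hR : ∀ x ∈ Ioc (1 : ℝ) X, (bR q κ x : ℂ) * (x : ℂ) ^ (-s - 1) =
      (bN q x : ℂ) * (x : ℂ) ^ (-s - 1) - κ * ((x : ℂ) ^ (-s) - (x : ℂ) ^ (-s - 1)) := by
    intro x hx
    have hx0 : (x : ℂ) ≠ 0 := Complex.ofReal_ne_zero.2 (one_pos.trans hx.1).ne'
    rw [bR, cpow_eq_mul_cpow_sub_one hx0 (-s)]
    push_cast
    ring
  have hpow r := add_one_mul_integral_Ioc_ofReal_cpow r one_pos hX
  have hI₀ := hpow (-s)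
  have hI₁ := hpow (-s - 1)
  rw [show -s + 1 = 1 - s by ring, Complex.ofReal_one, Complex.one_cpow,
    mul_comm, ← eq_div_iff (sub_ne_zero.2 hs1.symm)] at hI₀
  rw [sub_add_cancel, Complex.ofReal_one, Complex.one_cpow] at hI₁
  have hκ : IntegrableOn (fun x : ℝ => (κ : ℂ) * ((x : ℂ) ^ (-s) - (x : ℂ) ^ (-s - 1)))
      (Ioc 1 X) :=
    ((integrableOn_Ioc_ofReal_cpow _ one_pos).sub
      (integrableOn_Ioc_ofReal_cpow _ one_pos)).const_mul _
  rw [setIntegral_congr_fun measurableSet_Ioc hR,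
    integral_sub (integrableOn_Ioc_bN_mul_cpow hfin _) hκ,
    integral_const_mul, integral_sub (integrableOn_Ioc_ofReal_cpow _ one_pos)
      (integrableOn_Ioc_ofReal_cpow _ one_pos), mul_sub, mul_integral_Ioc_bN_mul_cpow hfin hq,
    hI₀]
  linear_combination -κ * hI₁

lemma measurable_bR_mul_cpow (r : ℂ) :
    Measurable fun x : ℝ => (bR q κ x : ℂ) * (x : ℂ) ^ r :=
  (Complex.measurable_ofReal.comp (measurable_bR hfin κ)).mul
    (Complex.measurable_ofReal.pow_const r)

lemma bZeta_sub_bZetaX_sub_eq (hq : ∀ i, 1 < q i) (hX : 1 ≤ X) (hs1 : s ≠ 1)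
    (hint : IntegrableOn (fun x : ℝ => (bR q κ x : ℂ) * (x : ℂ) ^ (-s - 1)) (Ioi 1)) :
    bZeta q κ s - bZetaX q X s - κ * (X : ℂ) ^ (1 - s) / (s - 1) =
      s * (∫ x in Ioi X, (bR q κ x : ℂ) * (x : ℂ) ^ (-s - 1)) -
        bR q κ X * (X : ℂ) ^ (-s) := by
  have hX0 : (X : ℂ) ≠ 0 := Complex.ofReal_ne_zero.2 (one_pos.trans_le hX).ne'
  rw [bZeta, ← Ioc_union_Ioi_eq_Ioi hX, setIntegral_union (Ioc_disjoint_Ioi le_rfl)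
    measurableSet_Ioi (hint.mono_set Ioc_subset_Ioi_self) (hint.mono_set (Ioi_subset_Ioi hX)),
    mul_add, mul_integral_Ioc_bR_mul_cpow hfin hq hX hs1, bR,
    cpow_eq_mul_cpow_sub_one hX0 (1 - s), sub_sub_cancel_left]
  push_cast
  field_simp [sub_ne_zero.2 hs1, sub_ne_zero.2 hs1.symm]
  ring

end Beurling

theorem statement_4_general
    (q : ℕ → ℝ) (hq : ∀ i, 1 < q i)
    (hfin : ∀ x : ℝ, {g : ℕ →₀ ℕ | bNorm q g ≤ x}.Finite)
    (κ A θ : ℝ)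
    (hAxiomA : ∀ x : ℝ, 1 ≤ x → |bR q κ x| ≤ A * x ^ θ)
    (X : ℝ) (hX : 1 ≤ X) (s : ℂ) (hs : θ < s.re) (hs1 : s ≠ 1) :
    ‖bZeta q κ s - bZetaX q X s - (κ : ℂ) * (X : ℂ) ^ ((1 : ℂ) - s) / (s - 1)‖ ≤
      A * (‖s‖ + s.re - θ) / (s.re - θ) * X ^ (θ - s.re) := by
  have hX0 : 0 < X := one_pos.trans_le hX
  have hβ : θ - s.re < 0 := sub_neg.2 hs
  have hbound : ∀ c, 1 ≤ c → ∀ x ∈ Ioi c,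
      ‖(bR q κ x : ℂ) * (x : ℂ) ^ (-s - 1)‖ ≤ A * x ^ (θ - s.re - 1) := fun c hc x hx =>
    norm_ofReal_mul_cpow_neg_sub_one_le (one_pos.trans_le (hc.trans hx.le))
      (hAxiomA x (hc.trans hx.le)) s
  have hint := integrableOn_Ioi_of_norm_le_rpow one_pos hβ
    (measurable_bR_mul_cpow hfin _).aestronglyMeasurable (hbound 1 le_rfl)
  have htail := norm_integral_Ioi_le_of_norm_le_rpow hX0 hβ (hbound X hX)
  have hboundary : ‖(bR q κ X : ℂ) * (X : ℂ) ^ (-s)‖ ≤ A * X ^ θ * X ^ (-s.re) := by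
    rw [norm_mul, Complex.norm_real, Real.norm_eq_abs, Complex.norm_cpow_eq_rpow_re_of_pos hX0,
      Complex.neg_re]
    gcongr
    exact hAxiomA X hX
  rw [bZeta_sub_bZetaX_sub_eq hfin hq hX hs1 hint]
  calc _ ≤ ‖s‖ * ‖∫ x in Ioi X, (bR q κ x : ℂ) * (x : ℂ) ^ (-s - 1)‖ +
        ‖(bR q κ X : ℂ) * (X : ℂ) ^ (-s)‖ := by
        rw [← norm_mul]; exact norm_sub_le _ _
    _ ≤ ‖s‖ * (A * X ^ (θ - s.re) / -(θ - s.re)) + A * X ^ θ * X ^ (-s.re) := by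
        gcongr
    _ = A * (‖s‖ + s.re - θ) / (s.re - θ) * X ^ (θ - s.re) := by
        rw [mul_assoc A, ← Real.rpow_add hX0, ← sub_eq_add_neg, neg_sub]
        field_simp [(sub_pos.2 hs).ne']
        ring

theorem statement_4
    (q : ℕ → ℝ) (hq : ∀ i, 1 < q i)
    (hfin : ∀ x : ℝ, {g : ℕ →₀ ℕ | bNorm q g ≤ x}.Finite)
    (κ A θ : ℝ) (hκ : 0 < κ) (hA : 0 < A) (hθ0 : 0 < θ) (hθ1 : θ < 1)
    (hAxiomA : ∀ x : ℝ, 1 ≤ x → |bR q κ x| ≤ A * x ^ θ)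
    (X : ℝ) (hX : 1 ≤ X) (s : ℂ) (hs : θ < s.re) (hs1 : s ≠ 1) :
    ‖bZeta q κ s - bZetaX q X s - (κ : ℂ) * (X : ℂ) ^ ((1 : ℂ) - s) / (s - 1)‖ ≤
      A * (‖s‖ + s.re - θ) / (s.re - θ) * X ^ (θ - s.re) :=
  statement_4_general q hq hfin κ A θ hAxiomA X hX s hs hs1
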